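/- For N ≥ 1 and integer 1 ≤ j with λ_j = 2πj/N ≤ π/2, the integral ∫_{λ_j/2}^{2λ_j} |D_N(λ − λ_j)| dλ ≤ 4(π + 2) + 4 log j, where D_N is the Dirichlet kernel. -/

import Mathlib

lemma abs_exp_I_sub_one (θ : ℝ) :
    ‖(Complex.exp ((θ:ℂ) * Complex.I) - 1)‖ = 2 * |Real.sin (θ / 2)| := by
  have h : Complex.exp ((θ:ℂ) * Complex.I) - 1
      = ((Real.cos θ - 1 : ℝ) : ℂ) + ((Real.sin θ : ℝ) : ℂ) * Complex.I := by
    rw [Complex.exp_mul_I]; push_cast; ring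
  rw [h, Complex.norm_add_mul_I]
  have h2 : (Real.cos θ - 1) ^ 2 + Real.sin θ ^ 2 = (2 * |Real.sin (θ / 2)|) ^ 2 := by
    have h3 : Real.sin (θ / 2) ^ 2 = (1 - Real.cos θ) / 2 := by
      have hc := Real.cos_sq (θ / 2)
      rw [show 2 * (θ / 2) = θ by ring] at hc
      have := Real.sin_sq_add_cos_sq (θ / 2)
      linarith
    have h4 : |Real.sin (θ / 2)| ^ 2 = Real.sin (θ / 2) ^ 2 := sq_abs _
    nlinarith [Real.sin_sq_add_cos_sq θ]
  rw [h2, Real.sqrt_sq (by positivity)]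

lemma dirichlet_eq (N : ℕ) (μ : ℝ) (h : Real.sin (μ / 2) ≠ 0) :
    ‖(∑ n ∈ Finset.Icc 1 N, Complex.exp ((n:ℂ) * (μ:ℂ) * Complex.I))‖
      = |Real.sin (N * μ / 2)| / |Real.sin (μ / 2)| := by
  set z := Complex.exp ((μ:ℂ) * Complex.I) with hz
  have hterm : ∀ n : ℕ, Complex.exp ((n:ℂ) * (μ:ℂ) * Complex.I) = z ^ n := by
    intro n
    rw [hz, ← Complex.exp_nat_mul]
    ring_nf
  have hz1 : z - 1 ≠ 0 := by
    intro h0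
    apply h
    have h1 : ‖(z - 1)‖ = 0 := by rw [h0]; simp
    rw [hz, abs_exp_I_sub_one] at h1
    have : |Real.sin (μ / 2)| = 0 := by linarith
    exact abs_eq_zero.mp this
  have hsum : ∑ n ∈ Finset.Icc 1 N, z ^ n = z * (z ^ N - 1) / (z - 1) := by
    induction N with
    | zero => simp
    | succ n ih =>
      rw [Finset.sum_Icc_succ_top (by omega), ih]
      field_simp
      ring
  rw [Finset.sum_congr rfl (fun n _ => hterm n), hsum, norm_div, norm_mul]
  have habsz : ‖z‖ = 1 := Complex.norm_exp_ofReal_mul_I μ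
  have hzN : z ^ N - 1 = Complex.exp (((N * μ : ℝ):ℂ) * Complex.I) - 1 := by
    rw [hz, ← Complex.exp_nat_mul]
    push_cast
    ring_nf
  have hzm : z - 1 = Complex.exp (((μ : ℝ):ℂ) * Complex.I) - 1 := by rw [hz]
  rw [hzN, hzm, abs_exp_I_sub_one, abs_exp_I_sub_one, habsz, one_mul]
  rw [mul_div_mul_left _ _ (two_ne_zero)]

lemma dirichlet_even (N : ℕ) (μ : ℝ) :
    ‖(∑ n ∈ Finset.Icc 1 N, Complex.exp ((n:ℂ) * ((-μ : ℝ):ℂ) * Complex.I))‖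
      = ‖(∑ n ∈ Finset.Icc 1 N, Complex.exp ((n:ℂ) * ((μ : ℝ):ℂ) * Complex.I))‖ := by
  have hterm : ∀ n : ℕ, Complex.exp ((n:ℂ) * ((-μ : ℝ):ℂ) * Complex.I)
      = (starRingEnd ℂ) (Complex.exp ((n:ℂ) * ((μ : ℝ):ℂ) * Complex.I)) := by
    intro n
    rw [← Complex.exp_conj]
    congr 1
    simp [Complex.conj_I]
  rw [Finset.sum_congr rfl (fun n _ => hterm n), ← map_sum, Complex.norm_conj]

open Real in
lemma period_integral (N : ℕ) (hN : 1 ≤ N) (a : ℝ) :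
    ∫ μ in a..(a + 2 * π / N), |Real.sin (N * μ / 2)| = 4 / N := by
  have hNpos : (0:ℝ) < N := by exact_mod_cast hN
  have hper : Function.Periodic (fun μ => |Real.sin (N * μ / 2)|) (2 * π / N) := by
    intro x
    simp only
    rw [show (N:ℝ) * (x + 2 * π / N) / 2 = N * x / 2 + π by field_simp,
      Real.sin_add_pi, abs_neg]
  rw [hper.intervalIntegral_add_eq a 0, zero_add]
  have hupos : (0:ℝ) < 2 * π / N := by positivity
  have hcong : ∫ μ in (0:ℝ)..(2 * π / N), |Real.sin (N * μ / 2)|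
      = ∫ μ in (0:ℝ)..(2 * π / N), Real.sin ((N / 2) * μ) := by
    apply intervalIntegral.integral_congr
    intro x hx
    rw [Set.uIcc_of_le hupos.le] at hx
    show |Real.sin ((N:ℝ) * x / 2)| = Real.sin ((N:ℝ) / 2 * x)
    rw [show (N:ℝ) * x / 2 = (N / 2) * x by ring]
    refine abs_of_nonneg (Real.sin_nonneg_of_nonneg_of_le_pi (mul_nonneg (by positivity) hx.1) ?_)
    have hx2 := (le_div_iff₀ hNpos).mp hx.2
    nlinarith
  rw [hcong, intervalIntegral.integral_comp_mul_left (fun x => Real.sin x) (by positivity : (N:ℝ)/2 ≠ 0)]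
  rw [mul_zero, show (N:ℝ) / 2 * (2 * π / N) = π by field_simp, integral_sin]
  rw [Real.cos_zero, Real.cos_pi]
  rw [smul_eq_mul]
  field_simp
  norm_num

open Real in
lemma dirichlet_le_pi_div (N : ℕ) (μ : ℝ) (h0 : 0 < μ) (hπμ : μ ≤ π) :
    ‖(∑ n ∈ Finset.Icc 1 N, Complex.exp ((n:ℂ) * (μ:ℂ) * Complex.I))‖
      ≤ |Real.sin (N * μ / 2)| * (π / μ) := by
  have hs : μ / π ≤ Real.sin (μ / 2) := by
    have h := Real.mul_le_sin (x := μ / 2) (by linarith) (by linarith)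
    calc μ / π = 2 / π * (μ / 2) := by field_simp
    _ ≤ _ := h
  have hspos : 0 < Real.sin (μ / 2) := lt_of_lt_of_le (by positivity) hs
  rw [dirichlet_eq N μ hspos.ne', abs_of_pos hspos]
  have h1 : 1 / Real.sin (μ / 2) ≤ π / μ := by
    rw [div_le_div_iff₀ hspos h0]
    have := (div_le_iff₀ Real.pi_pos).mp hs
    linarith
  calc |Real.sin (N * μ / 2)| / Real.sin (μ / 2)
      = |Real.sin (N * μ / 2)| * (1 / Real.sin (μ / 2)) := by ring
    _ ≤ |Real.sin (N * μ / 2)| * (π / μ) :=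
        mul_le_mul_of_nonneg_left h1 (abs_nonneg _)

lemma dirichlet_le_card (N : ℕ) (μ : ℝ) :
    ‖(∑ n ∈ Finset.Icc 1 N, Complex.exp ((n:ℂ) * (μ:ℂ) * Complex.I))‖ ≤ N := by
  calc ‖(∑ n ∈ Finset.Icc 1 N, Complex.exp ((n:ℂ) * (μ:ℂ) * Complex.I))‖
      ≤ ∑ n ∈ Finset.Icc 1 N, ‖(Complex.exp ((n:ℂ) * (μ:ℂ) * Complex.I))‖ :=
        norm_sum_le _ _
    _ = ∑ n ∈ Finset.Icc 1 N, 1 := by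
        refine Finset.sum_congr rfl fun n _ => ?_
        rw [show (n:ℂ) * (μ:ℂ) * Complex.I = ((n * μ : ℝ):ℂ) * Complex.I by push_cast; ring]
        exact Complex.norm_exp_ofReal_mul_I _
    _ = N := by simp

open Real in
lemma dirichlet_cont (N : ℕ) :
    Continuous fun μ : ℝ =>
      ‖(∑ n ∈ Finset.Icc 1 N, Complex.exp ((n:ℂ) * (μ:ℂ) * Complex.I))‖ := by
  apply continuous_norm.comp
  apply continuous_finset_sum
  intro n _
  exact Complex.continuous_exp.comp
    ((continuous_const.mul Complex.continuous_ofReal).mul continuous_const)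

open Finset

set_option maxHeartbeats 1000000 in
/-- For `N ≥ 1`, `1 ≤ j` and `λ_j = 2πj/N` with `2λ_j ≤ π`,
`∫_{λ_j/2}^{2λ_j} |D_N(λ − λ_j)| dλ ≤ 4(π + 2) + 4 log j` where
`D_N(λ) = Σ_{n=1}^N e^{inλ}` is the Dirichlet kernel. -/
theorem integral_dirichlet_window_bound (N j : ℕ) (hN : 1 ≤ N) (hj : 1 ≤ j)
    (lamj : ℝ) (hlamj : lamj = 2 * Real.pi * j / N) (h2 : 2 * lamj ≤ Real.pi) :
    (∫ lam in (lamj / 2)..(2 * lamj),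
        ‖(∑ n ∈ Finset.Icc 1 N,
          Complex.exp ((n:ℂ) * ((lam - lamj : ℝ) : ℂ) * Complex.I))‖) ≤
      4 * (Real.pi + 2) + 4 * Real.log j := by
  have hπ := Real.pi_pos
  have hNpos : (0:ℝ) < N := by exact_mod_cast hN
  have hjpos : (0:ℝ) < j := by exact_mod_cast hj
  set g : ℝ → ℝ := fun μ =>
    ‖(∑ n ∈ Finset.Icc 1 N, Complex.exp ((n:ℂ) * (μ:ℂ) * Complex.I))‖ with hgdef
  have hg_cont : Continuous g := dirichlet_cont N
  have hint : ∀ a b : ℝ, IntervalIntegrable g MeasureTheory.volume a b :=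
    fun a b => hg_cont.intervalIntegrable a b
  have hg0 : ∀ μ, 0 ≤ g μ := fun μ => norm_nonneg _
  set c : ℝ := 2 * Real.pi / N with hcdef
  have hc : 0 < c := by positivity
  have hlam : lamj = j * c := by rw [hlamj, hcdef]; ring
  have hlampos : 0 < lamj := by rw [hlam]; positivity
  -- Step A: change of variables
  have hA : (∫ lam in (lamj / 2)..(2 * lamj),
        ‖(∑ n ∈ Finset.Icc 1 N,
          Complex.exp ((n:ℂ) * ((lam - lamj : ℝ) : ℂ) * Complex.I))‖)
      = ∫ μ in (-(lamj / 2))..lamj, g μ := by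
    have : (∫ lam in (lamj / 2)..(2 * lamj),
        ‖(∑ n ∈ Finset.Icc 1 N,
          Complex.exp ((n:ℂ) * ((lam - lamj : ℝ) : ℂ) * Complex.I))‖)
        = ∫ lam in (lamj / 2)..(2 * lamj), g (lam - lamj) := by simp only [hgdef]
    rw [this, intervalIntegral.integral_comp_sub_right g lamj,
      show lamj / 2 - lamj = -(lamj / 2) by ring, show 2 * lamj - lamj = lamj by ring]
  rw [hA]
  -- Step B: reflect negative part
  have hsplit : ∫ μ in (-(lamj / 2))..lamj, g μ
      = (∫ μ in (-(lamj / 2))..(0:ℝ), g μ) + ∫ μ in (0:ℝ)..lamj, g μ :=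
    (intervalIntegral.integral_add_adjacent_intervals (hint _ _) (hint _ _)).symm
  have heven : ∀ x : ℝ, g (-x) = g x := fun x => by
    simp only [hgdef]
    exact_mod_cast dirichlet_even N x
  have hneg : ∫ μ in (-(lamj / 2))..(0:ℝ), g μ = ∫ μ in (0:ℝ)..(lamj / 2), g μ := by
    have h1 : ∫ x in (0:ℝ)..(lamj / 2), g (-x) = ∫ μ in (-(lamj / 2))..(-(0:ℝ)), g μ :=
      intervalIntegral.integral_comp_neg g
    rw [intervalIntegral.integral_congr (fun x _ => heven x)] at h1
    have h2' : ∫ μ in (-(lamj / 2))..(0:ℝ), g μ = ∫ μ in (-(lamj / 2))..(-0:ℝ), g μ := by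
      norm_num
    rw [h2', ← h1]
  have hmono : ∫ μ in (0:ℝ)..(lamj / 2), g μ ≤ ∫ μ in (0:ℝ)..lamj, g μ := by
    have hadd : ∫ μ in (0:ℝ)..lamj, g μ
        = (∫ μ in (0:ℝ)..(lamj / 2), g μ) + ∫ μ in (lamj / 2)..lamj, g μ :=
      (intervalIntegral.integral_add_adjacent_intervals (hint _ _) (hint _ _)).symm
    have hnn : 0 ≤ ∫ μ in (lamj / 2)..lamj, g μ :=
      intervalIntegral.integral_nonneg (by linarith) (fun x _ => hg0 x)
    linarith
  -- Step C: main estimate on [0, lamj]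
  have hmain : ∫ μ in (0:ℝ)..lamj, g μ ≤ 2 * Real.pi + 2 + 2 * Real.log j := by
    have hsum : ∑ k ∈ Finset.range j, ∫ μ in ((k:ℝ) * c)..(((k:ℕ) + 1 : ℕ) * c), g μ
        = ∫ μ in ((0:ℕ) * c : ℝ)..((j:ℝ) * c), g μ :=
      intervalIntegral.sum_integral_adjacent_intervals (a := fun k => (k:ℝ) * c)
        (fun k _ => hint _ _)
    rw [show (∫ μ in (0:ℝ)..lamj, g μ) = ∫ μ in ((0:ℕ) * c : ℝ)..((j:ℝ) * c), g μ by
      rw [hlam]; norm_num, ← hsum]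
    -- bound each term
    have hterm : ∀ k ∈ Finset.range j, (∫ μ in ((k:ℝ) * c)..(((k:ℕ) + 1 : ℕ) * c), g μ)
        ≤ if k = 0 then 2 * Real.pi else 2 / k := by
      intro k hk
      have hkj : k + 1 ≤ j := Finset.mem_range.mp hk
      have hup : ((k:ℝ) + 1) * c ≤ Real.pi := by
        have : ((k:ℝ) + 1) * c ≤ (j:ℝ) * c := by
          apply mul_le_mul_of_nonneg_right _ hc.le
          exact_mod_cast hkj
        rw [← hlam] at this
        linarith
      rcases Nat.eq_zero_or_pos k with rfl | hkpos
      · simp only [if_pos rfl]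
        calc (∫ μ in ((0:ℕ):ℝ) * c..(((0:ℕ) + 1 : ℕ) * c), g μ)
            ≤ ∫ _ in ((0:ℕ):ℝ) * c..(((0:ℕ) + 1 : ℕ) * c), (N:ℝ) := by
              apply intervalIntegral.integral_mono_on (by norm_num; linarith) (hint _ _)
                (intervalIntegrable_const)
              intro x _
              exact dirichlet_le_card N x
          _ = 2 * Real.pi := by
              rw [intervalIntegral.integral_const, smul_eq_mul]
              push_cast
              rw [hcdef]
              field_simp
              norm_num
      · have hkR : (0:ℝ) < k := by exact_mod_cast hkpos
        rw [if_neg hkpos.ne']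
        have hbound : ∀ x ∈ Set.Icc ((k:ℝ) * c) (((k:ℕ) + 1 : ℕ) * c),
            g x ≤ |Real.sin (N * x / 2)| * (Real.pi / ((k:ℝ) * c)) := by
          intro x hx
          have hx1 : (k:ℝ) * c ≤ x := hx.1
          have hxpos : 0 < x := lt_of_lt_of_le (by positivity) hx1
          have hxpi : x ≤ Real.pi := by
            refine le_trans hx.2 ?_
            push_cast
            exact hup
          calc g x ≤ |Real.sin (N * x / 2)| * (Real.pi / x) := dirichlet_le_pi_div N x hxpos hxpi
            _ ≤ |Real.sin (N * x / 2)| * (Real.pi / ((k:ℝ) * c)) := by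
                apply mul_le_mul_of_nonneg_left _ (abs_nonneg _)
                apply div_le_div_of_nonneg_left hπ.le (by positivity) hx1
        calc (∫ μ in ((k:ℝ) * c)..(((k:ℕ) + 1 : ℕ) * c), g μ)
            ≤ ∫ μ in ((k:ℝ) * c)..(((k:ℕ) + 1 : ℕ) * c),
                |Real.sin (N * μ / 2)| * (Real.pi / ((k:ℝ) * c)) := by
              apply intervalIntegral.integral_mono_on _ (hint _ _) _ hbound
              · push_cast; nlinarith
              · exact (((Real.continuous_sin.comp (by continuity)).abs).mul
                  continuous_const).intervalIntegrable _ _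
          _ = (∫ μ in ((k:ℝ) * c)..(((k:ℕ) + 1 : ℕ) * c), |Real.sin (N * μ / 2)|)
                * (Real.pi / ((k:ℝ) * c)) := by
              rw [← intervalIntegral.integral_mul_const]
          _ = (4 / N) * (Real.pi / ((k:ℝ) * c)) := by
              rw [show ((((k:ℕ) + 1 : ℕ):ℝ) * c) = (k:ℝ) * c + 2 * Real.pi / N by
                push_cast; rw [hcdef]; ring]
              rw [period_integral N hN]
          _ = 2 / k := by
              rw [hcdef]
              field_simp
              ring
    calc ∑ k ∈ Finset.range j, ∫ μ in ((k:ℝ) * c)..(((k:ℕ) + 1 : ℕ) * c), g μ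
        ≤ ∑ k ∈ Finset.range j, if k = 0 then 2 * Real.pi else 2 / (k:ℝ) :=
          Finset.sum_le_sum hterm
      _ ≤ 2 * Real.pi + 2 + 2 * Real.log j := by
          obtain ⟨m, rfl⟩ : ∃ m, j = m + 1 := ⟨j - 1, (Nat.succ_pred_eq_of_pos hj).symm⟩
          rw [Finset.sum_range_succ']
          simp only [if_pos rfl]
          have hsum1 : ∑ i ∈ Finset.range m,
                (if i + 1 = 0 then 2 * Real.pi else 2 / ((i + 1 : ℕ):ℝ))
              = 2 * ((harmonic m : ℚ) : ℝ) := by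
            rw [harmonic]
            push_cast
            rw [Finset.mul_sum]
            refine Finset.sum_congr rfl fun i _ => ?_
            rw [div_eq_mul_inv]
          rw [hsum1]
          have hh := harmonic_le_one_add_log m
          have hlog : Real.log m ≤ Real.log (m + 1 : ℕ) := by
            rcases Nat.eq_zero_or_pos m with rfl | hm
            · simp
            · apply Real.log_le_log (by exact_mod_cast hm)
              exact_mod_cast Nat.le_succ m
          push_cast at hlog ⊢
          linarith
  rw [hsplit, hneg]
  have hlogj : 0 ≤ Real.log j := Real.log_natCast_nonneg j
  linarith
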